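/- Let Y be a nonempty complete metric space and s : Y → ℝ a function with s(y) ≥ 0 for all y ∈ Y. Assume: (i) for every δ > 0 the set {y ∈ Y : s(y) < δ} is open in Y; and (ii) for every y ∈ Y there exist ε > 0, a continuous map γ : (-ε, ε) → Y with γ(0) = y, real numbers a ≤ b, and an assignment to each t ∈ (-ε, ε) of a Lebesgue-measurable set N(t) ⊆ [a, b] such that the sets N(t) are pairwise disjoint and such that s(γ(t)) = 0 whenever vol(N(t)) = 0. Then {y ∈ Y : s(y) = 0} is comeagre in Y, i.e. {y ∈ Y : s(y) ≠ 0} is a countable union of nowhere dense sets. -/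

import Mathlib

/-!
Along a path `γ` through `y`, the sets `N t` are disjoint pieces of the finite-measure interval
`[a, b]`, so only countably many of them have positive measure. Since a countable subset of `ℝ`
has dense complement, `γ t` lies in the zero set of `s` for parameters `t` accumulating at `0`;
hence `{s = 0}` is dense. As `s ≥ 0`, the zero set is the intersection of the open sublevel sets
`{s < 1 / (n + 1)}`, each of which is dense because it contains `{s = 0}`; so `{s = 0}` is residual.
-/

open MeasureTheory Set Function

theorem MeasureTheory.Measure.countable_setOf_meas_pos_of_pairwise_disjoint
    {α ι : Type*} [MeasurableSpace α] (μ : Measure α) {I : Set ι} {N : ι → Set α}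
    (hN : ∀ t ∈ I, MeasurableSet (N t)) (hdisj : I.Pairwise (Disjoint on N))
    (hfin : μ (⋃ t ∈ I, N t) ≠ ⊤) :
    {t ∈ I | 0 < μ (N t)}.Countable := by
  have hcount : {i : I | 0 < μ (N i)}.Countable :=
    Measure.countable_meas_pos_of_disjoint_of_meas_iUnion_ne_top μ (fun i ↦ hN i i.2)
      (fun i j hij ↦ hdisj i.2 j.2 (Subtype.coe_injective.ne hij))
      (by rwa [iUnion_subtype])
  refine (hcount.image Subtype.val).mono ?_
  rintro t ⟨ht, hpos⟩
  exact ⟨⟨t, ht⟩, hpos, rfl⟩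

theorem ContinuousOn.mem_closure_image_diff_countable {Y : Type*} [TopologicalSpace Y]
    {γ : ℝ → Y} {I C : Set ℝ} {t₀ : ℝ} (hγ : ContinuousOn γ I) (hI : IsOpen I) (ht₀ : t₀ ∈ I)
    (hC : C.Countable) :
    γ t₀ ∈ closure (γ '' (I \ C)) :=
  ((hγ t₀ ht₀).mono sdiff_subset).mem_closure_image
    ((hC.dense_compl ℝ).open_subset_closure_inter hI ht₀)

theorem residual_of_dense_setOf_eq_zero {X : Type*} [TopologicalSpace X] {s : X → ℝ}
    (hs : ∀ x, 0 ≤ s x) (hopen : ∀ δ > 0, IsOpen {x | s x < δ}) (hdense : Dense {x | s x = 0}) :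
    {x | s x = 0} ∈ residual X := by
  have hzero : {x | s x = 0} = ⋂ n : ℕ, {x | s x < 1 / (n + 1)} := by
    ext x
    simp only [mem_ofPred_eq, mem_iInter]
    refine ⟨fun hx n ↦ hx ▸ Nat.one_div_pos_of_nat, fun hx ↦ ?_⟩
    refine (hs x).antisymm' (le_of_forall_gt_imp_ge_of_dense fun δ hδ ↦ ?_)
    obtain ⟨n, hn⟩ := exists_nat_one_div_lt hδ
    exact ((hx n).trans hn).le
  rw [hzero, countable_iInter_mem]
  intro n
  refine residual_of_dense_open (hopen _ Nat.one_div_pos_of_nat) (hdense.mono ?_)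
  intro x hx
  simp only [mem_ofPred_eq] at hx ⊢
  exact hx ▸ Nat.one_div_pos_of_nat

theorem zero_set_comeagre_of_open_sublevels_of_local_paths_general
    {Y : Type*} [MetricSpace Y]
    (s : Y → ℝ) (hs : ∀ y, 0 ≤ s y)
    (hopen : ∀ δ > 0, IsOpen {y | s y < δ})
    (hloc : ∀ y : Y, ∃ (ε : ℝ) (γ : ℝ → Y) (a b : ℝ) (N : ℝ → Set ℝ),
      0 < ε ∧ ContinuousOn γ (Set.Ioo (-ε) ε) ∧ γ 0 = y ∧ a ≤ b ∧
      (∀ t ∈ Set.Ioo (-ε) ε, MeasurableSet (N t)) ∧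
      (∀ t ∈ Set.Ioo (-ε) ε, N t ⊆ Set.Icc a b) ∧
      (Set.Ioo (-ε) ε).Pairwise (Function.onFun Disjoint N) ∧
      (∀ t ∈ Set.Ioo (-ε) ε, volume (N t) = 0 → s (γ t) = 0)) :
    IsMeagre {y | s y ≠ 0} := by
  have hdense : Dense {y | s y = 0} := by
    intro y
    obtain ⟨ε, γ, a, b, N, hε, hγ, rfl, -, hNm, hNsub, hNdisj, hN0⟩ := hloc y
    have hfin : volume (⋃ t ∈ Ioo (-ε) ε, N t) ≠ ⊤ :=
      ne_top_of_le_ne_top (by simp) (measure_mono (iUnion₂_subset hNsub))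
    have hpos := volume.countable_setOf_meas_pos_of_pairwise_disjoint hNm hNdisj hfin
    refine closure_mono ?_ (hγ.mem_closure_image_diff_countable isOpen_Ioo
      ⟨neg_lt_zero.2 hε, hε⟩ hpos)
    rintro _ ⟨t, ⟨ht, hnull⟩, rfl⟩
    exact hN0 t ht (nonpos_iff_eq_zero.1 (not_lt.1 fun h ↦ hnull ⟨ht, h⟩))
  simpa only [IsMeagre, compl_ofPred, not_not] using residual_of_dense_setOf_eq_zero hs hopen hdense

/-- Let `Y` be a nonemtpy complete metric space and `s : Y → ℝ` nonnegative. Assume (i) every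
sublevel set `{s < δ}` (for `δ > 0`) is open, and (ii) through every point of `Y` there is a
continuous path `γ : (-ε, ε) → Y` together with pairwise disjoint Lebesgue-measurable sets
`N t ⊆ [a, b]` such that `s (γ t) = 0` whenever `vol (N t) = 0`. Then `{s = 0}` is comeagre,
i.e. `{s ≠ 0}` is a countable union of nowhere dense sets. -/
theorem zero_set_comeagre_of_open_sublevels_of_local_paths
    {Y : Type*} [MetricSpace Y] [CompleteSpace Y] [Nonempty Y]
    (s : Y → ℝ) (hs : ∀ y, 0 ≤ s y)
    (hopen : ∀ δ > 0, IsOpen {y | s y < δ})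
    (hloc : ∀ y : Y, ∃ (ε : ℝ) (γ : ℝ → Y) (a b : ℝ) (N : ℝ → Set ℝ),
      0 < ε ∧ ContinuousOn γ (Set.Ioo (-ε) ε) ∧ γ 0 = y ∧ a ≤ b ∧
      (∀ t ∈ Set.Ioo (-ε) ε, MeasurableSet (N t)) ∧
      (∀ t ∈ Set.Ioo (-ε) ε, N t ⊆ Set.Icc a b) ∧
      (Set.Ioo (-ε) ε).Pairwise (Function.onFun Disjoint N) ∧
      (∀ t ∈ Set.Ioo (-ε) ε, volume (N t) = 0 → s (γ t) = 0)) :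
    IsMeagre {y | s y ≠ 0} :=
  zero_set_comeagre_of_open_sublevels_of_local_paths_general s hs hopen hloc
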